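/- arXiv:2106.02871 — 3 statements merged into one kernel-verified Lean document; each statement's English description precedes it below -/
import Mathlib

section
/- If a monotone path P1 in the diagram D from (i_1,1) to (m+i_2, n+1) and a monotone path P2 from (i_2,1) to (m+i_3, n+1) intersect at a common point, then there exists a monotone path from (i_2,1) to (m+i_2, n+1) whose points all lie on P1 ∪ P2. -/
/-- The diagram `D = {1,…,2m} × {1,…,n}`. -/
def Dgm (m n : ℕ) : Set (ℕ × ℕ) :=
  {p | 1 ≤ p.1 ∧ p.1 ≤ 2 * m ∧ 1 ≤ p.2 ∧ p.2 ≤ n}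

/-- The wrapped moves north, east and northeast on the diagram: `north (i,j) = (i,j+1)`
if `j < n` and `(i-m,1)` if `j = n`, `i > m`; `east (i,j) = (i+1,j)` if `i < 2m`;
`northeast (i,j) = (i+1,j+1)` if `i < 2m`, `j < n` and `(i-m+1,1)` if `i ≥ m`, `j = n`;
undefined otherwise. -/
def MoveW (m n : ℕ) (p q : ℕ × ℕ) : Prop :=
  (p.2 < n ∧ q = (p.1, p.2 + 1)) ∨ (p.2 = n ∧ m < p.1 ∧ q = (p.1 - m, 1)) ∨
  (p.1 < 2 * m ∧ q = (p.1 + 1, p.2)) ∨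
  (p.1 < 2 * m ∧ p.2 < n ∧ q = (p.1 + 1, p.2 + 1)) ∨
  (m ≤ p.1 ∧ p.2 = n ∧ q = (p.1 - m + 1, 1))

/-- One unwrapped monotone step: north, east or northeast. -/
def NStep (p q : ℕ × ℕ) : Prop :=
  q = (p.1, p.2 + 1) ∨ q = (p.1 + 1, p.2) ∨ q = (p.1 + 1, p.2 + 1)

/-- A monotone path on the diagram from `(a, 1)` to the virtual point `(m + b, n + 1)`
(which is identified with `(b, 1)`); only the final point may lie on the virtual row. -/
def MonoPath (m n a b : ℕ) (L : List (ℕ × ℕ)) : Prop :=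
  L.head? = some (a, 1) ∧ L.getLast? = some (m + b, n + 1) ∧
  List.Chain' NStep L ∧ ∀ p ∈ L.dropLast, p.2 ≤ n

/-- A forbidden set `F` is closed under the dead-end rule: any point of the diagram all of
whose (wrapped) successors are forbidden or undefined is itself forbidden. -/
def DeadEndClosed (m n : ℕ) (F : Set (ℕ × ℕ)) : Prop :=
  ∀ p ∈ Dgm m n, (∀ q, MoveW m n p q → q ∈ F) → p ∈ F

/-! Cut both paths at the common point `q` and join the part of `P₂` before `q` to the part
of `P₁` after `q`: the result starts where `P₂` starts, ends where `P₁` ends, and every step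
and every non-final point of it is already a step or a non-final point of `P₁` or `P₂`. -/

theorem List.IsChain.splice {α : Type*} {R : α → α → Prop} {q : α} {A₁ B₁ A₂ B₂ : List α}
    (h₁ : IsChain R (A₁ ++ q :: B₁)) (h₂ : IsChain R (A₂ ++ q :: B₂)) :
    IsChain R (A₂ ++ q :: B₁) :=
  isChain_split.2 ⟨(isChain_split.1 h₂).1, (isChain_split.1 h₁).2⟩

theorem MonoPath.splice {m n a b c d : ℕ} {q : ℕ × ℕ} {A₁ B₁ A₂ B₂ : List (ℕ × ℕ)}
    (h₁ : MonoPath m n a b (A₁ ++ q :: B₁)) (h₂ : MonoPath m n c d (A₂ ++ q :: B₂)) :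
    MonoPath m n c b (A₂ ++ q :: B₁) := by
  obtain ⟨-, last₁, chain₁, low₁⟩ := h₁
  obtain ⟨head₂, -, chain₂, low₂⟩ := h₂
  refine ⟨?_, ?_, chain₁.splice chain₂, ?_⟩
  · simpa only [List.head?_append, List.head?_cons] using head₂
  · simpa only [List.getLast?_append_cons] using last₁
  · simp only [List.dropLast_append_cons, List.mem_append] at low₁ low₂ ⊢
    rintro p (hp | hp)
    exacts [low₂ p (.inl hp), low₁ p (.inr hp)]

theorem monotone_paths_splice_general (m n : ℕ)
    (i₁ i₂ i₃ : ℕ)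
    (P₁ P₂ : List (ℕ × ℕ))
    (hP₁ : MonoPath m n i₁ i₂ P₁) (hP₂ : MonoPath m n i₂ i₃ P₂)
    (q : ℕ × ℕ) (hq₁ : q ∈ P₁) (hq₂ : q ∈ P₂) :
    ∃ P, MonoPath m n i₂ i₂ P ∧ ∀ p ∈ P, p ∈ P₁ ∨ p ∈ P₂ := by
  obtain ⟨A₁, B₁, rfl⟩ := List.append_of_mem hq₁
  obtain ⟨A₂, B₂, rfl⟩ := List.append_of_mem hq₂
  refine ⟨A₂ ++ q :: B₁, hP₁.splice hP₂, fun p hp => ?_⟩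
  simp only [List.mem_append, List.mem_cons] at hp ⊢
  tauto

/-- Path splicing (step in the proof of Lemma 1): if a monotone path `P₁` from `(i₁,1)` to
`(m+i₂, n+1)` and a monotone path `P₂` from `(i₂,1)` to `(m+i₃, n+1)` share a common
point, then there is a monotone path from `(i₂,1)` to `(m+i₂, n+1)` all of whose points
lie on `P₁ ∪ P₂`. -/
theorem monotone_paths_splice (m n : ℕ) (hm : 1 ≤ m) (hn : 1 ≤ n)
    (i₁ i₂ i₃ : ℕ) (h₁ : 1 ≤ i₁ ∧ i₁ ≤ m) (h₂ : 1 ≤ i₂ ∧ i₂ ≤ m) (h₃ : 1 ≤ i₃ ∧ i₃ ≤ m)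
    (P₁ P₂ : List (ℕ × ℕ))
    (hP₁ : MonoPath m n i₁ i₂ P₁) (hP₂ : MonoPath m n i₂ i₃ P₂)
    (q : ℕ × ℕ) (hq₁ : q ∈ P₁) (hq₂ : q ∈ P₂) :
    ∃ P, MonoPath m n i₂ i₂ P ∧ ∀ p ∈ P, p ∈ P₁ ∨ p ∈ P₂ :=
  monotone_paths_splice_general m n i₁ i₂ i₃ P₁ P₂ hP₁ hP₂ q hq₁ hq₂
end

section
/- Suppose a permutation of the multiset A = {(d(i,j), i, j) : (i,j) ∈ D} is split into a prefix L and suffix R with every element of L ≥ every element of R (compared by first component). If after deleting (forbidding, with dead-end closure) exactly the points of L from the diagram, some allowed point remains, then the closed discrete Fréchet distance δ_dcF(U,V) equals d(i,j) for some (d,i,j) ∈ R. -/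
/-- The maximum of `d` along a path (the final, virtual point is identified with the
starting point and hence excluded). -/
noncomputable def pathVal (d : ℕ × ℕ → ℝ) (L : List (ℕ × ℕ)) : ℝ :=
  (L.dropLast.map d).foldr max 0

/-- The min-max over wrap-around monotone paths of `d`: the closed discrete Fréchet
distance in its path formulation. -/
noncomputable def dcFpath (m n : ℕ) (d : ℕ × ℕ → ℝ) : ℝ :=
  sInf {x | ∃ i, 1 ≤ i ∧ i ≤ m ∧ ∃ L, MonoPath m n i i L ∧ pathVal d L = x}

/-- The distance function on the doubled diagram:
`dd m u v (i, j) = dist (u i) (v j)` for `i ≤ m` and `dist (u (i - m)) (v j)` for `i > m`. -/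
noncomputable def dd {M : Type*} [MetricSpace M] (m : ℕ) (u v : ℕ → M) : ℕ × ℕ → ℝ :=
  fun p => if p.1 ≤ m then dist (u p.1) (v p.2) else dist (u (p.1 - m)) (v p.2)

/-- The list of all points of the diagram `{1,…,2m} × {1,…,n}`. -/
def gridList (m n : ℕ) : List (ℕ × ℕ) :=
  (List.range' 1 (2 * m)).flatMap fun i => (List.range' 1 n).map fun j => (i, j)


/-!
Let `A` be the diagram minus `F`. Dead-end closure gives every point of `A` a successor in `A`;
fixing one, the walk from a point of row `1` climbs monotonically until it wraps from row `n`
back to row `1`, landing in column `landCol c` when it starts at `(c, 1)`. Walks from `(c, 1)`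
and `(c', 1)` with `c ≤ c'` cannot cross (once they meet they coincide), so `landCol` is
monotone and has a fixed point, whose walk is a closed wrap-around path inside `A`. Its value is
`d q` for an allowed `q`, so `(d q, q) ∈ R` and `δ ≤ d q`, where `δ = dcFpath`. This minimum is
attained at a point `p` of the diagram: either `(d p, p) ∈ R`, or `(d p, p) ∈ L` and then
`d q ≤ d p = δ ≤ d q`.
-/

theorem exists_fixed_of_monotoneOn_of_mapsTo {α : Type*} [ConditionallyCompleteLinearOrder α]
    {f : α → α} {S : Set α} (hne : S.Nonempty) (hfin : S.Finite) (hmaps : Set.MapsTo f S S)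
    (hmono : MonotoneOn f S) : ∃ c ∈ S, f c = c := by
  set P := {x ∈ S | x ≤ f x}
  have hmin : sInf S ∈ S := hne.csInf_mem hfin
  have hP : P.Nonempty := ⟨sInf S, hmin, csInf_le hfin.bddBelow (hmaps hmin)⟩
  have hPfin : P.Finite := hfin.subset (Set.sep_subset _ _)
  obtain ⟨hcS, hcf⟩ : sSup P ∈ P := hP.csSup_mem hPfin
  exact ⟨sSup P, hcS, le_antisymm
    (le_csSup hPfin.bddAbove ⟨hmaps hcS, hmono hcS (hmaps hcS) hcf⟩) hcf⟩

namespace NStep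

variable {p q : ℕ × ℕ}

theorem le (h : NStep p q) : p ≤ q := by
  rcases h with rfl | rfl | rfl <;> simp [Prod.le_def]

theorem fst_le_fst_add_one (h : NStep p q) : q.1 ≤ p.1 + 1 := by
  rcases h with rfl | rfl | rfl <;> simp

theorem fst_add_snd_lt (h : NStep p q) : p.1 + p.2 < q.1 + q.2 := by
  rcases h with rfl | rfl | rfl <;> dsimp only <;> omega

theorem sub_fst {k : ℕ} (hk : k ≤ p.1) (h : NStep p q) : NStep (p.1 - k, p.2) (q.1 - k, q.2) := by
  rcases h with rfl | rfl | rfl <;> simp [NStep] <;> omega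

end NStep

theorem MoveW.nstep_or_wrap {m n : ℕ} {p q : ℕ × ℕ} (h : MoveW m n p q) :
    NStep p q ∨ (p.2 = n ∧ q.2 = 1 ∧ NStep p (m + q.1, n + 1)) := by
  rcases h with ⟨-, rfl⟩ | ⟨hj, hi, rfl⟩ | ⟨-, rfl⟩ | ⟨-, -, rfl⟩ | ⟨hi, hj, rfl⟩
  · exact .inl (.inl rfl)
  · exact .inr ⟨hj, rfl, .inl (by simp [hj]; omega)⟩
  · exact .inl (.inr (.inl rfl))
  · exact .inl (.inr (.inr rfl))
  · exact .inr ⟨hj, rfl, .inr (.inr (by simp [hj]; omega))⟩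

theorem MoveW.mem_dgm {m n : ℕ} {p q : ℕ × ℕ} (h : MoveW m n p q) (hp : p ∈ Dgm m n) :
    q ∈ Dgm m n := by
  obtain ⟨h1, h2, h3, h4⟩ := hp
  rcases h with ⟨_, rfl⟩ | ⟨_, _, rfl⟩ | ⟨_, rfl⟩ | ⟨_, _, rfl⟩ | ⟨_, _, rfl⟩ <;>
    exact ⟨by omega, by omega, by omega, by omega⟩

section Staircase

variable {γ : ℕ → ℕ × ℕ} {T : ℕ}

def StrictlyRightOf (γ : ℕ → ℕ × ℕ) (T : ℕ) (q : ℕ × ℕ) : Prop :=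
  ∀ s ≤ T, (γ s).2 = q.2 → (γ s).1 < q.1

theorem staircase_monotoneOn (hγ : ∀ s < T, NStep (γ s) (γ (s + 1))) :
    MonotoneOn γ (Set.Iic T) :=
  monotoneOn_of_le_succ Set.ordConnected_Iic fun s _ _ hs => (hγ s hs).le

/-- A staircase entering row `j` at or left of column `x` either passes through `(x, j)` or
stays strictly left of it. -/
theorem staircase_mem_or_strictlyRightOf (hγ : ∀ s < T, NStep (γ s) (γ (s + 1))) {x j : ℕ}
    (h0 : (γ 0).2 = j → (γ 0).1 ≤ x) (hbelow : ∀ s ≤ T, (γ s).2 + 1 = j → (γ s).1 < x) :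
    (∃ s ≤ T, γ s = (x, j)) ∨ StrictlyRightOf γ T (x, j) := by
  have cover : ∀ s ≤ T, (γ s).2 = j → x ≤ (γ s).1 → ∃ t ≤ s, γ t = (x, j) := by
    intro s
    induction s with
    | zero => exact fun _ hj hx => ⟨0, le_rfl, Prod.ext (le_antisymm (h0 hj) hx) hj⟩
    | succ s ih =>
      intro hs hj hx
      rcases hx.eq_or_lt with hx | hx
      · exact ⟨s + 1, le_rfl, Prod.ext hx.symm hj⟩
      have hb := hbelow s (by omega)
      rcases hγ s hs with h | h | h <;> rw [h] at hj hx <;> dsimp only at hj hx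
      · exact absurd (hb hj) (by omega)
      · obtain ⟨t, ht, hγt⟩ := ih (by omega) hj (by omega)
        exact ⟨t, by omega, hγt⟩
      · exact absurd (hb hj) (by omega)
  by_cases hmeet : ∃ s ≤ T, (γ s).2 = j ∧ x ≤ (γ s).1
  · obtain ⟨s, hs, hj, hx⟩ := hmeet
    obtain ⟨t, ht, hγt⟩ := cover s hs hj hx
    exact .inl ⟨t, by omega, hγt⟩
  · push Not at hmeet
    exact .inr hmeet

end Staircase

structure IsSuccessorMap (m n : ℕ) (A : Set (ℕ × ℕ)) (nxt : ℕ × ℕ → ℕ × ℕ) : Prop where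
  subset : A ⊆ Dgm m n
  mapsTo : Set.MapsTo nxt A A
  move : ∀ p ∈ A, MoveW m n p (nxt p)

noncomputable def wrapTime (nxt : ℕ × ℕ → ℕ × ℕ) (p : ℕ × ℕ) : ℕ :=
  sInf {t | ¬ NStep (nxt^[t] p) (nxt^[t + 1] p)}

noncomputable def landCol (nxt : ℕ × ℕ → ℕ × ℕ) (c : ℕ) : ℕ :=
  (nxt^[wrapTime nxt (c, 1) + 1] (c, 1)).1

theorem nstep_of_lt_wrapTime {nxt : ℕ × ℕ → ℕ × ℕ} {p : ℕ × ℕ} {s : ℕ}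
    (hs : s < wrapTime nxt p) : NStep (nxt^[s] p) (nxt^[s + 1] p) :=
  not_not.mp (Nat.notMem_of_lt_sInf hs)

namespace IsSuccessorMap

variable {m n : ℕ} {A : Set (ℕ × ℕ)} {nxt : ℕ × ℕ → ℕ × ℕ} (h : IsSuccessorMap m n A nxt)
include h

theorem exists_not_nstep {p : ℕ × ℕ} (hp : p ∈ A) :
    ∃ t, ¬ NStep (nxt^[t] p) (nxt^[t + 1] p) := by
  by_contra! hall
  have hgrow : ∀ t, p.1 + p.2 + t ≤ (nxt^[t] p).1 + (nxt^[t] p).2 := by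
    intro t
    induction t with
    | zero => simp
    | succ t ih => have := (hall t).fst_add_snd_lt; omega
  have hbound := h.subset (h.mapsTo.iterate (2 * m + n) hp)
  have hstart := h.subset hp
  have := hgrow (2 * m + n)
  simp only [Dgm, Set.mem_ofPred_eq] at hbound hstart
  omega

theorem lt_wrapTime_iff {p : ℕ × ℕ} (hp : p ∈ A) {s : ℕ} (hs : s ≤ wrapTime nxt p) :
    s < wrapTime nxt p ↔ NStep (nxt^[s] p) (nxt (nxt^[s] p)) := by
  rw [← Function.iterate_succ_apply' nxt]
  refine ⟨nstep_of_lt_wrapTime, fun hstep => hs.lt_of_ne ?_⟩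
  rintro rfl
  exact Nat.sInf_mem (h.exists_not_nstep hp) hstep

theorem wrap_at_wrapTime {p : ℕ × ℕ} (hp : p ∈ A) :
    (nxt^[wrapTime nxt p] p).2 = n ∧ (nxt^[wrapTime nxt p + 1] p).2 = 1 ∧
      NStep (nxt^[wrapTime nxt p] p) (m + (nxt^[wrapTime nxt p + 1] p).1, n + 1) := by
  have hwrap := mt (h.lt_wrapTime_iff hp le_rfl).mpr (lt_irrefl _)
  have hmove := h.move _ (h.mapsTo.iterate (wrapTime nxt p) hp)
  rw [← Function.iterate_succ_apply' nxt] at hwrap hmove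
  exact hmove.nstep_or_wrap.resolve_left hwrap

theorem landing_mem {p : ℕ × ℕ} (hp : p ∈ A) : ((nxt^[wrapTime nxt p + 1] p).1, 1) ∈ A := by
  have hland : ((nxt^[wrapTime nxt p + 1] p).1, 1) = nxt^[wrapTime nxt p + 1] p :=
    Prod.ext rfl (h.wrap_at_wrapTime hp).2.1.symm
  rw [hland]
  exact h.mapsTo.iterate _ hp

/-- Walks from `(c, 1)` and `(c', 1)` with `c ≤ c'` cannot cross. -/
theorem mem_or_strictlyRightOf {c c' : ℕ} (hc : (c, 1) ∈ A) (hc' : (c', 1) ∈ A) (hcc : c ≤ c') :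
    ∀ t ≤ wrapTime nxt (c', 1),
      (∃ s ≤ wrapTime nxt (c, 1), nxt^[s] (c, 1) = nxt^[t] (c', 1)) ∨
        StrictlyRightOf (fun s => nxt^[s] (c, 1)) (wrapTime nxt (c, 1)) (nxt^[t] (c', 1)) := by
  have hγ : ∀ s < wrapTime nxt (c, 1), NStep (nxt^[s] (c, 1)) (nxt^[s + 1] (c, 1)) :=
    fun s hs => nstep_of_lt_wrapTime hs
  have hrow : ∀ {p} (t : ℕ), p ∈ A → 1 ≤ (nxt^[t] p).2 :=
    fun t hp => (h.subset (h.mapsTo.iterate t hp)).2.2.1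
  intro t
  induction t with
  | zero =>
    intro _
    exact staircase_mem_or_strictlyRightOf hγ (fun _ => hcc)
      (fun s _ hs => absurd hs (by have := hrow s hc; omega))
  | succ t ih =>
    intro ht
    have hstep : NStep (nxt^[t] (c', 1)) (nxt^[t + 1] (c', 1)) := nstep_of_lt_wrapTime ht
    rcases ih (by omega) with ⟨s, hs, hmeet⟩ | hright
    · refine .inl ⟨s + 1, ?_, ?_⟩
      · rwa [Nat.add_one_le_iff, h.lt_wrapTime_iff hc hs, hmeet, ← h.lt_wrapTime_iff hc' (by omega)]
      · rw [Function.iterate_succ_apply', Function.iterate_succ_apply', hmeet]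
    · have hq := hrow t hc'
      generalize nxt^[t] (c', 1) = q at hstep hright hq
      generalize nxt^[t + 1] (c', 1) = q' at hstep ⊢
      have hup : ∀ x, q.1 ≤ x → (∃ s ≤ wrapTime nxt (c, 1), nxt^[s] (c, 1) = (x, q.2 + 1)) ∨
          StrictlyRightOf (fun s => nxt^[s] (c, 1)) (wrapTime nxt (c, 1)) (x, q.2 + 1) :=
        fun x hx => staircase_mem_or_strictlyRightOf hγ (fun hj => by simp at hj; omega)
          (fun s hs hj => by have := hright s hs (by simpa using hj); dsimp only at this; omega)
      rcases hstep with rfl | rfl | rfl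
      · exact hup _ le_rfl
      · exact .inr fun s hs hj => by have := hright s hs hj; dsimp only at this ⊢; omega
      · exact hup _ (Nat.le_succ _)

theorem landCol_mono {c c' : ℕ} (hc : (c, 1) ∈ A) (hc' : (c', 1) ∈ A) (hcc : c ≤ c') :
    landCol nxt c ≤ landCol nxt c' := by
  obtain ⟨hrow, -, hland⟩ := h.wrap_at_wrapTime hc
  obtain ⟨hrow', -, hland'⟩ := h.wrap_at_wrapTime hc'
  rcases h.mem_or_strictlyRightOf hc hc' hcc _ le_rfl with ⟨s, hs, hmeet⟩ | hright
  · obtain rfl : s = wrapTime nxt (c, 1) := by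
      by_contra hne
      have hlt := (h.lt_wrapTime_iff hc hs).mp (hs.lt_of_ne hne)
      rw [hmeet, ← h.lt_wrapTime_iff hc' le_rfl] at hlt
      exact lt_irrefl _ hlt
    simp only [landCol, Function.iterate_succ_apply', hmeet, le_rfl]
  · have hlt := hright _ le_rfl (hrow.trans hrow'.symm)
    have hleft := hland.fst_le_fst_add_one
    have hright' := hland'.le.1
    dsimp only [landCol] at hlt hleft hright' ⊢
    omega

theorem exists_landCol_eq (hA : A.Nonempty) : ∃ c, (c, 1) ∈ A ∧ landCol nxt c = c := by
  obtain ⟨p, hp⟩ := hA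
  have hS : {c | (c, 1) ∈ A}.Nonempty := ⟨_, h.landing_mem hp⟩
  have hfin : {c | (c, 1) ∈ A}.Finite :=
    (Set.finite_Iic (2 * m)).subset fun c hc => (h.subset hc).2.1
  exact exists_fixed_of_monotoneOn_of_mapsTo hS hfin (fun _ hc => h.landing_mem hc)
    (fun _ hc _ hc' => h.landCol_mono hc hc')

end IsSuccessorMap

theorem List.foldr_max_mem_of_le {α : Type*} [LinearOrder α] {l : List α} {b : α} (hl : l ≠ [])
    (h : ∀ x ∈ l, b ≤ x) : l.foldr max b ∈ l := by
  induction l with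
  | nil => exact absurd rfl hl
  | cons a l ih =>
    rw [List.foldr_cons]
    rcases eq_or_ne l [] with rfl | hl'
    · simp [h a (by simp)]
    · rcases max_choice a (l.foldr max b) with hmax | hmax <;> rw [hmax]
      · exact List.mem_cons_self
      · exact List.mem_cons_of_mem _ (ih hl' fun x hx => h x (List.mem_cons_of_mem _ hx))

section Paths

variable {m n : ℕ} {d : ℕ × ℕ → ℝ}

theorem pathVal_nonneg (d : ℕ × ℕ → ℝ) (L : List (ℕ × ℕ)) : 0 ≤ pathVal d L := by
  unfold pathVal
  induction L.dropLast.map d with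
  | nil => exact le_rfl
  | cons a l ih => exact ih.trans (le_max_right _ _)

theorem exists_mem_pathVal_eq (hd : ∀ p, 0 ≤ d p) {L : List (ℕ × ℕ)} (hL : L.dropLast ≠ []) :
    ∃ p ∈ L.dropLast, pathVal d L = d p := by
  have hmem := List.foldr_max_mem_of_le (l := L.dropLast.map d)
    (List.map_eq_nil_iff.not.mpr hL) (fun x hx => by
      obtain ⟨p, -, rfl⟩ := List.mem_map.mp hx
      exact hd p)
  obtain ⟨p, hp, hval⟩ := List.mem_map.mp hmem
  exact ⟨p, hp, hval.symm⟩

theorem exists_pathVal_staircase_eq (hd : ∀ p, 0 ≤ d p) (γ : ℕ → ℕ × ℕ) (T : ℕ)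
    (x : ℕ × ℕ) : ∃ s ≤ T, pathVal d ((List.range (T + 1)).map γ ++ [x]) = d (γ s) := by
  obtain ⟨p, hp, hval⟩ := exists_mem_pathVal_eq hd (L := (List.range (T + 1)).map γ ++ [x])
    (by simp)
  simp only [List.dropLast_concat, List.mem_map, List.mem_range] at hp
  obtain ⟨s, hs, rfl⟩ := hp
  exact ⟨s, by omega, hval⟩

theorem monoPath_of_staircase {γ : ℕ → ℕ × ℕ} {T a b : ℕ} (h0 : γ 0 = (a, 1))
    (hγ : ∀ s < T, NStep (γ s) (γ (s + 1))) (hrow : ∀ s ≤ T, (γ s).2 ≤ n)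
    (hT : NStep (γ T) (m + b, n + 1)) :
    MonoPath m n a b ((List.range (T + 1)).map γ ++ [(m + b, n + 1)]) := by
  refine ⟨by simp [List.range_succ_eq_map, h0], List.getLast?_concat, ?_, ?_⟩
  · refine List.isChain_append.mpr ⟨?_, List.isChain_singleton _, ?_⟩
    · rw [List.isChain_map, List.isChain_range_succ]
      exact hγ
    · intro x hx y hy
      simp only [List.range_succ, List.map_append, List.map_cons, List.map_nil,
        List.getLast?_concat, List.head?_cons, Option.mem_def, Option.some.injEq] at hx hy
      exact hx ▸ hy ▸ hT
  · simpa using fun s hs => hrow s (by omega)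

theorem MonoPath.mem_dgm {a b : ℕ} {P : List (ℕ × ℕ)} (hP : MonoPath m n a b P) (ha : 1 ≤ a)
    (hb : b ≤ m) : ∀ p ∈ P.dropLast, p ∈ Dgm m n := by
  obtain ⟨hhead, hlast, hchain, hrow⟩ := hP
  have hsorted : P.Pairwise (· ≤ ·) :=
    List.isChain_iff_pairwise.mp (List.IsChain.imp (fun _ _ => NStep.le) hchain)
  have hup : ∀ p ∈ P.dropLast, p ≤ (m + b, n + 1) := by
    rw [← List.dropLast_append_getLast? _ hlast, List.pairwise_append] at hsorted
    exact fun p hp => hsorted.2.2 p hp _ (List.mem_singleton_self _)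
  obtain ⟨x, l, rfl⟩ := List.exists_cons_of_ne_nil (fun hnil : P = [] => by simp [hnil] at hhead)
  obtain rfl : x = (a, 1) := by simpa using hhead
  intro p hp
  have hlow : (a, 1) ≤ p := by
    rcases List.mem_cons.mp (List.mem_of_mem_dropLast hp) with rfl | hpl
    · exact le_rfl
    · exact List.rel_of_pairwise_cons hsorted hpl
  have := hrow p hp
  have := hup p hp
  simp only [Prod.le_def] at *
  exact ⟨by omega, by omega, by omega, by omega⟩

theorem MonoPath.dropLast_ne_nil {a : ℕ} {P : List (ℕ × ℕ)} (hP : MonoPath m n a a P)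
    (hm : 0 < m) : P.dropLast ≠ [] := by
  obtain ⟨hhead, hlast, -, -⟩ := hP
  match P with
  | [] => simp at hhead
  | [x] =>
    simp only [List.head?_cons, List.getLast?_singleton, Option.some.injEq] at hhead hlast
    have := congrArg Prod.fst (hhead.symm.trans hlast)
    dsimp only at this
    omega
  | _ :: _ :: _ => simp

end Paths

theorem mem_gridList {m n : ℕ} {p : ℕ × ℕ} : p ∈ gridList m n ↔ p ∈ Dgm m n := by
  simp only [gridList, List.mem_flatMap, List.mem_map, List.mem_range'_1, Dgm, Set.mem_ofPred_eq]
  constructor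
  · rintro ⟨i, hi, j, hj, rfl⟩
    omega
  · rintro ⟨h1, h2, h3, h4⟩
    exact ⟨p.1, by omega, p.2, by omega, rfl⟩

section FrechetDistance

variable {m n : ℕ} {d : ℕ × ℕ → ℝ}

theorem dcFpath_le {i : ℕ} {P : List (ℕ × ℕ)} (hi : 1 ≤ i) (him : i ≤ m)
    (hP : MonoPath m n i i P) : dcFpath m n d ≤ pathVal d P :=
  csInf_le ⟨0, by rintro _ ⟨_, _, _, _, _, rfl⟩; exact pathVal_nonneg _ _⟩ ⟨i, hi, him, P, hP, rfl⟩

theorem dcFpath_mem_image (hd : ∀ p, 0 ≤ d p) {i : ℕ} {P : List (ℕ × ℕ)} (hi : 1 ≤ i)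
    (him : i ≤ m) (hP : MonoPath m n i i P) : dcFpath m n d ∈ d '' Dgm m n := by
  set S := {x | ∃ i, 1 ≤ i ∧ i ≤ m ∧ ∃ L, MonoPath m n i i L ∧ pathVal d L = x}
  have hsub : S ⊆ d '' Dgm m n := by
    rintro _ ⟨i, hi, him, L, hL, rfl⟩
    obtain ⟨p, hp, hval⟩ := exists_mem_pathVal_eq hd (hL.dropLast_ne_nil (by omega))
    exact ⟨p, hL.mem_dgm hi him p hp, hval.symm⟩
  have hfin : S.Finite :=
    (((gridList m n).finite_toSet.subset fun _ hp => mem_gridList.mpr hp).image d).subset hsub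
  exact hsub (Set.Nonempty.csInf_mem ⟨_, i, hi, him, P, hP, rfl⟩ hfin)

end FrechetDistance

section DoubledDistance

variable {M : Type*} [MetricSpace M] {m : ℕ} (u v : ℕ → M)

theorem dd_nonneg (p : ℕ × ℕ) : 0 ≤ dd m u v p := by
  unfold dd
  split <;> exact dist_nonneg

theorem dd_sub_self {i j : ℕ} (hi : m < i) (hi' : i ≤ 2 * m) :
    dd m u v (i - m, j) = dd m u v (i, j) := by
  simp only [dd]
  rw [if_pos (by omega), if_neg (by omega)]

end DoubledDistance

/-- A fixed point `c` of the landing map closes the walk from `(c, 1)` into a wrap-around path;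
if `c = m + 1` it is moved back by the period `m` of the doubled diagram. -/
theorem exists_closed_monoPath {M : Type*} [MetricSpace M] {m n : ℕ} (u v : ℕ → M)
    {A : Set (ℕ × ℕ)} (hAD : A ⊆ Dgm m n) (hsucc : ∀ p ∈ A, ∃ q ∈ A, MoveW m n p q)
    (hA : A.Nonempty) :
    ∃ i, 1 ≤ i ∧ i ≤ m ∧ ∃ P, MonoPath m n i i P ∧ ∃ q ∈ A, pathVal (dd m u v) P = dd m u v q := by
  choose! nxt hnxtA hnxt using hsucc
  have h : IsSuccessorMap m n A nxt := ⟨hAD, hnxtA, hnxt⟩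
  obtain ⟨c, hc, hfix⟩ := h.exists_landCol_eq hA
  set T := wrapTime nxt (c, 1)
  set γ : ℕ → ℕ × ℕ := fun s => nxt^[s] (c, 1)
  have hγA : ∀ s, γ s ∈ A := fun s => h.mapsTo.iterate s hc
  have hγ : ∀ s < T, NStep (γ s) (γ (s + 1)) := fun s hs => nstep_of_lt_wrapTime hs
  have hT : NStep (γ T) (m + c, n + 1) := hfix ▸ (h.wrap_at_wrapTime hc).2.2
  have hrow : ∀ s ≤ T, (γ s).2 ≤ n := fun s _ => (hAD (hγA s)).2.2.2
  have hc1 : 1 ≤ c := (hAD hc).1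
  have hc_le : c ≤ m + 1 := by
    have hland := hT.fst_le_fst_add_one
    have hTm := (hAD (hγA T)).2.1
    dsimp only at hland
    omega
  rcases Nat.le_add_one_iff.mp hc_le with hcm | rfl
  · obtain ⟨s, -, hs⟩ := exists_pathVal_staircase_eq (dd_nonneg u v) γ T (m + c, n + 1)
    exact ⟨c, hc1, hcm, _, monoPath_of_staircase rfl hγ hrow hT, γ s, hγA s, hs⟩
  · have hγm : ∀ s ≤ T, m < (γ s).1 := fun s hs =>
      (staircase_monotoneOn hγ (Set.mem_Iic.mpr (Nat.zero_le T)) hs (Nat.zero_le s)).1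
    set γ' : ℕ → ℕ × ℕ := fun s => ((γ s).1 - m, (γ s).2)
    obtain ⟨s, hs, hs'⟩ := exists_pathVal_staircase_eq (dd_nonneg u v) γ' T (m + 1, n + 1)
    have hm : 1 ≤ m := by have := (hAD hc).2.1; omega
    refine ⟨1, le_rfl, hm, _, monoPath_of_staircase (γ := γ') (by simp [γ', γ]) ?_ hrow ?_,
      γ s, hγA s, ?_⟩
    · exact fun s hs => (hγ s hs).sub_fst (hγm s hs.le).le
    · simpa using hT.sub_fst (k := m) (by have := hγm T le_rfl; omega)
    · rw [hs', dd_sub_self u v (hγm s hs) (hAD (hγA s)).2.1]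

theorem lemma2_statement1_general {M : Type*} [MetricSpace M]
    (m n : ℕ) (u v : ℕ → M)
    (L R : List (ℝ × ℕ × ℕ))
    (hperm : (L ++ R).Perm ((gridList m n).map fun p => (dd m u v p, p.1, p.2)))
    (hLR : ∀ a ∈ L, ∀ b ∈ R, b.1 ≤ a.1)
    (F : Set (ℕ × ℕ)) (hFD : F ⊆ Dgm m n)
    (hFL : ∀ e ∈ L, (e.2.1, e.2.2) ∈ F)
    (hFclosed : DeadEndClosed m n F)
    (hrem : F ≠ Dgm m n) :
    ∃ e ∈ R, dcFpath m n (dd m u v) = e.1 := by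
  have hA : (Dgm m n \ F).Nonempty :=
    Set.sdiff_nonempty.mpr fun hsub => hrem (hFD.antisymm hsub)
  have hsucc : ∀ p ∈ Dgm m n \ F, ∃ q ∈ Dgm m n \ F, MoveW m n p q := by
    rintro p ⟨hpD, hpF⟩
    by_contra! hdead
    exact hpF (hFclosed p hpD fun q hq => by_contra fun hqF => hdead q ⟨hq.mem_dgm hpD, hqF⟩ hq)
  obtain ⟨i, hi, him, P, hP, q, ⟨hqD, hqF⟩, hPq⟩ :=
    exists_closed_monoPath u v Set.sdiff_subset hsucc hA
  obtain ⟨p, hpD, hp⟩ := dcFpath_mem_image (dd_nonneg u v) hi him hP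
  have hle : dcFpath m n (dd m u v) ≤ dd m u v q := hPq ▸ dcFpath_le hi him hP
  have hmem : ∀ p ∈ Dgm m n, (dd m u v p, p.1, p.2) ∈ L ∨ (dd m u v p, p.1, p.2) ∈ R :=
    fun p hp => List.mem_append.mp
      (hperm.mem_iff.mpr (List.mem_map.mpr ⟨p, mem_gridList.mpr hp, rfl⟩))
  have hqR : (dd m u v q, q.1, q.2) ∈ R := (hmem q hqD).resolve_left fun hqL => hqF (hFL _ hqL)
  rcases hmem p hpD with hpL | hpR
  · exact ⟨_, hqR, le_antisymm hle (hp ▸ hLR _ hpL _ hqR)⟩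
  · exact ⟨_, hpR, hp.symm⟩

/-- Statement 1 of Lemma 2: split a permutation of the multiset
`A = {(d(i,j), i, j) : (i,j) ∈ D}` into a prefix `L` and a suffix `R` with every element
of `L` at least every element of `R`. If deleting exactly the points of `L` (together with
the dead-end closure) leaves some allowed point, then the closed discrete Fréchet distance
is the first component of some element of `R`. -/
theorem lemma2_statement1 {M : Type*} [MetricSpace M]
    (m n : ℕ) (hm : 1 ≤ m) (hn : 1 ≤ n) (u v : ℕ → M)
    (L R : List (ℝ × ℕ × ℕ))
    (hperm : (L ++ R).Perm ((gridList m n).map fun p => (dd m u v p, p.1, p.2)))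
    (hLR : ∀ a ∈ L, ∀ b ∈ R, b.1 ≤ a.1)
    (F : Set (ℕ × ℕ)) (hFD : F ⊆ Dgm m n)
    (hFL : ∀ e ∈ L, (e.2.1, e.2.2) ∈ F)
    (hFclosed : DeadEndClosed m n F)
    (hFmin : ∀ G, G ⊆ Dgm m n → (∀ e ∈ L, (e.2.1, e.2.2) ∈ G) →
      DeadEndClosed m n G → F ⊆ G)
    (hrem : F ≠ Dgm m n) :
    ∃ e ∈ R, dcFpath m n (dd m u v) = e.1 :=
  lemma2_statement1_general m n u v L R hperm hLR F hFD hFL hFclosed hrem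
end

section
/- The closed discrete Fréchet distance equals the min-max over wrap-around monotone paths: δ_dcF(U,V) = min over i* ∈ {1,...,m} and monotone paths P in D from (i*,1) to (m+i*, n+1) of max_{(i,j) ∈ P} d(i,j). -/
def CouplingStep (p q : ℕ × ℕ) : Prop :=
  (q.1 = p.1 ∨ q.1 = p.1 + 1) ∧ (q.2 = p.2 ∨ q.2 = p.2 + 1) ∧ q ≠ p

def IsCoupling (m n : ℕ) (L : List (ℕ × ℕ)) : Prop :=
  L.head? = some (1, 1) ∧ L.getLast? = some (m, n) ∧ List.Chain' CouplingStep L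

noncomputable def couplingLength (d : ℕ → ℕ → ℝ) (L : List (ℕ × ℕ)) : ℝ :=
  (L.map fun p => d p.1 p.2).foldr max 0

noncomputable def dF (m n : ℕ) (d : ℕ → ℕ → ℝ) : ℝ :=
  sInf {x | ∃ L, IsCoupling m n L ∧ couplingLength d L = x}

def cshift {M : Type*} (m : ℕ) (u : ℕ → M) (s : ℕ) : ℕ → M :=
  fun i => if i + s ≤ m then u (i + s) else u (i + s - m)

/-- The closed discrete Fréchet distance: minimum over cyclic shifts of both sequences of
the open discrete Fréchet distance. -/
noncomputable def dcF {M : Type*} [MetricSpace M] (m n : ℕ) (u v : ℕ → M) : ℝ :=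
  sInf {x | ∃ s < m, ∃ t < n,
    dF m n (fun i j => dist (cshift m u s i) (cshift n v t j)) = x}

/-!
Both sides are min-max values over closed monotone loops on the torus `ℤ/m × ℤ/n`, where the
distance becomes the periodic function `torusDist` on `ℕ × ℕ`. A coupling of the shifts `(s, t)`,
translated by `(s, t)`, is such a loop closed by the diagonal step from `(s + m, t + n)`; a
wrap-around path is such a loop starting in column `1`. Cutting a translated coupling where it
crosses from column `n` to column `n + 1`, and gluing the first piece, moved by `(m, n)`, behind the
second, gives a loop starting in column `n + 1 ≡ 1`. Conversely, cutting a wrap-around path from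
`(i, 1)` where it enters row `m + i ≡ i`, and dropping the points of that row up to the crossing
column, gives a loop closed by a diagonal step. Every point of the new loop is congruent to a point
of the old one, so in both directions the min-max value does not increase.
-/

namespace DiscreteFrechet

open List Function

theorem NStep.lt {p q : ℕ × ℕ} (h : NStep p q) : p < q := by
  rcases h with rfl | rfl | rfl <;> simp [Prod.lt_iff]

theorem nstep_add_right_iff {p q c : ℕ × ℕ} : NStep (p + c) (q + c) ↔ NStep p q := by
  simp only [NStep, Prod.ext_iff, Prod.fst_add, Prod.snd_add]
  omega

theorem NStep.tsub_right {p q c : ℕ × ℕ} (h : NStep p q) (hc : c ≤ p) : NStep (p - c) (q - c) := by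
  rw [Prod.le_def] at hc
  simp only [NStep, Prod.ext_iff, Prod.fst_sub, Prod.snd_sub] at h ⊢
  omega

theorem NStep.fst_le {p q : ℕ × ℕ} (h : NStep p q) : p.1 ≤ q.1 ∧ q.1 ≤ p.1 + 1 := by
  rcases h with rfl | rfl | rfl <;> simp

theorem NStep.snd_le {p q : ℕ × ℕ} (h : NStep p q) : p.2 ≤ q.2 ∧ q.2 ≤ p.2 + 1 := by
  rcases h with rfl | rfl | rfl <;> simp

inductive IsPath : ℕ × ℕ → ℕ × ℕ → List (ℕ × ℕ) → Prop
  | singleton (a : ℕ × ℕ) : IsPath a a [a]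
  | cons {a b c : ℕ × ℕ} {L : List (ℕ × ℕ)} : NStep a b → IsPath b c L → IsPath a c (a :: L)

namespace IsPath

variable {a b c d : ℕ × ℕ} {L L₁ L₂ : List (ℕ × ℕ)}

theorem head_mem (h : IsPath a b L) : a ∈ L := by
  cases h <;> exact mem_cons_self

theorem last_mem (h : IsPath a b L) : b ∈ L := by
  induction h with
  | singleton => exact mem_singleton_self _
  | cons _ _ ih => exact mem_cons_of_mem _ ih

theorem le_of_mem (h : IsPath a b L) {p : ℕ × ℕ} (hp : p ∈ L) : a ≤ p ∧ p ≤ b := by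
  induction h generalizing p with
  | singleton => rw [mem_singleton.1 hp]; exact ⟨le_rfl, le_rfl⟩
  | cons hab h ih =>
    rcases mem_cons.1 hp with rfl | hp
    · exact ⟨le_rfl, (NStep.lt hab).le.trans (ih h.head_mem).2⟩
    · exact ⟨(NStep.lt hab).le.trans (ih hp).1, (ih hp).2⟩

theorem append (h₁ : IsPath a b L₁) (hbc : NStep b c) (h₂ : IsPath c d L₂) :
    IsPath a d (L₁ ++ L₂) := by
  induction h₁ with
  | singleton => exact .cons hbc h₂
  | cons hab _ ih => exact .cons hab (ih hbc)

theorem concat (h : IsPath a b L) (hbc : NStep b c) : IsPath a c (L ++ [c]) :=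
  h.append hbc (.singleton c)

theorem map_add (h : IsPath a b L) (c : ℕ × ℕ) : IsPath (a + c) (b + c) (L.map (· + c)) := by
  induction h with
  | singleton a => exact .singleton _
  | cons hab _ ih => exact .cons (nstep_add_right_iff.2 hab) ih

theorem map_tsub (h : IsPath a b L) (hc : c ≤ a) : IsPath (a - c) (b - c) (L.map (· - c)) := by
  induction h with
  | singleton a => exact .singleton _
  | cons hab _ ih => exact .cons (NStep.tsub_right hab hc) (ih (hc.trans (NStep.lt hab).le))

theorem dropLast (h : IsPath a b L) (hab : a ≠ b) :
    ∃ x, IsPath a x L.dropLast ∧ NStep x b := by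
  induction h with
  | singleton => exact absurd rfl hab
  | @cons a a' b L haa' h ih =>
    by_cases ha' : a' = b
    · subst ha'
      cases h with
      | singleton => exact ⟨a, .singleton a, haa'⟩
      | cons hstep h' =>
        exact absurd ((NStep.lt hstep).trans_le (h'.le_of_mem h'.head_mem).2) (lt_irrefl _)
    · obtain ⟨x, hx, hxb⟩ := ih ha'
      rw [dropLast_cons_of_ne_nil (ne_nil_of_mem h.head_mem)]
      exact ⟨x, .cons haa' hx, hxb⟩

theorem exists_split {f : ℕ × ℕ → ℕ} (hf : ∀ p q, NStep p q → f p ≤ f q ∧ f q ≤ f p + 1)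
    (h : IsPath a b L) {k : ℕ} (ha : f a ≤ k) (hb : k < f b) :
    ∃ L₁ L₂ x y, L = L₁ ++ L₂ ∧ IsPath a x L₁ ∧ NStep x y ∧ IsPath y b L₂ ∧
      f x = k ∧ f y = k + 1 := by
  induction h with
  | singleton => omega
  | @cons a a' b L haa' h ih =>
    have := hf _ _ haa'
    by_cases hk : k < f a'
    · exact ⟨[a], L, a, a', rfl, .singleton a, haa', h, by omega, by omega⟩
    · obtain ⟨L₁, L₂, x, y, rfl, h₁, hxy, h₂, hx, hy⟩ := ih (by omega) hb
      exact ⟨a :: L₁, L₂, x, y, rfl, .cons haa' h₁, hxy, h₂, hx, hy⟩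

theorem exists_suffix {f : ℕ × ℕ → ℕ} (hf : ∀ p q, NStep p q → f p ≤ f q ∧ f q ≤ f p + 1)
    (h : IsPath a b L) {k : ℕ} (ha : f a ≤ k + 1) (hb : k < f b) :
    ∃ L' y, L' <:+ L ∧ IsPath y b L' ∧ f y = k + 1 := by
  by_cases hak : f a = k + 1
  · exact ⟨L, a, suffix_refl L, h, hak⟩
  · obtain ⟨L₁, L₂, -, y, rfl, -, -, h₂, -, hy⟩ := h.exists_split hf (by omega) hb
    exact ⟨L₂, y, suffix_append L₁ L₂, h₂, hy⟩

theorem exists_map_add (h : IsPath a b L) (hc : c ≤ a) :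
    ∃ L', IsPath (a - c) (b - c) L' ∧ L'.map (· + c) = L := by
  refine ⟨L.map (· - c), h.map_tsub hc, ?_⟩
  rw [map_map]
  exact (map_congr_left fun p hp => tsub_add_cancel_of_le (hc.trans (h.le_of_mem hp).1)).trans
    (map_id' L)

theorem rotate (h₁ : IsPath a b L₁) (hbc : NStep b c) (h₂ : IsPath c d L₂) {e : ℕ × ℕ}
    (hd : NStep d (a + e)) : IsPath c (c + e) (L₂ ++ L₁.map (· + e) ++ [c + e]) :=
  (h₂.append hd (h₁.map_add e)).concat (nstep_add_right_iff.2 hbc)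

end IsPath

theorem isPath_iff {a b : ℕ × ℕ} {L : List (ℕ × ℕ)} :
    IsPath a b L ↔ L.head? = some a ∧ L.getLast? = some b ∧ L.IsChain NStep := by
  constructor
  · intro h
    induction h with
    | singleton a => exact ⟨rfl, rfl, isChain_singleton a⟩
    | cons hab h ih =>
      obtain ⟨hhead, hlast, hchain⟩ := ih
      refine ⟨rfl, ?_, isChain_cons.2 ⟨fun y hy => ?_, hchain⟩⟩
      · rw [getLast?_cons, hlast]; rfl
      · rw [hhead, Option.mem_some_iff] at hy; exact hy ▸ hab
  · induction L generalizing a with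
    | nil => simp
    | cons x L ih =>
      rintro ⟨hhead, hlast, hchain⟩
      obtain rfl : x = a := Option.some.inj hhead
      cases L with
      | nil => obtain rfl := Option.some.inj hlast; exact .singleton x
      | cons y L =>
        rw [isChain_cons_cons] at hchain
        exact .cons hchain.1 (ih ⟨rfl, by rwa [getLast?_cons_cons] at hlast, hchain.2⟩)

theorem exists_isPath : ∀ {a b : ℕ × ℕ}, a ≤ b → ∃ L, IsPath a b L
  | a, b, h =>
    if hab : a = b then ⟨[a], hab ▸ .singleton a⟩
    else if h₁ : a.1 < b.1 then
      have ⟨L, hL⟩ := exists_isPath (a := (a.1 + 1, a.2)) (b := b) ⟨h₁, h.2⟩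
      ⟨a :: L, .cons (Or.inr (Or.inl rfl)) hL⟩
    else
      have h₂ : a.2 < b.2 := by
        rw [Prod.le_def] at h; rw [Prod.ext_iff] at hab; omega
      have ⟨L, hL⟩ := exists_isPath (a := (a.1, a.2 + 1)) (b := b) ⟨h.1, h₂⟩
      ⟨a :: L, .cons (Or.inl rfl) hL⟩
  termination_by a b => (b.1 - a.1) + (b.2 - a.2)
  decreasing_by all_goals omega

theorem isCoupling_iff {m n : ℕ} {L : List (ℕ × ℕ)} :
    IsCoupling m n L ↔ IsPath (1, 1) (m, n) L := by
  have hstep : CouplingStep = NStep := by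
    funext p q
    apply propext
    simp only [CouplingStep, NStep, Prod.ext_iff, ne_eq]
    omega
  rw [isPath_iff, ← hstep]
  rfl

theorem monoPath_iff {m n a b : ℕ} {L : List (ℕ × ℕ)} :
    MonoPath m n a b L ↔ IsPath (a, 1) (m + b, n + 1) L ∧ ∀ p ∈ L.dropLast, p.2 ≤ n := by
  rw [isPath_iff, MonoPath]
  simp only [and_assoc]
  rfl

section Periodic

variable {β : Type*} {f : ℕ × ℕ → β}

theorem map_map_add_of_periodic {c : ℕ × ℕ} (hf : Periodic f c) (L : List (ℕ × ℕ)) :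
    (L.map (· + c)).map f = L.map f := by
  rw [map_map]
  exact map_congr_left fun p _ => hf p

theorem map_map_tsub_of_periodic {c : ℕ × ℕ} (hf : Periodic f c) {L : List (ℕ × ℕ)}
    (hL : ∀ p ∈ L, c ≤ p) : (L.map (· - c)).map f = L.map f := by
  rw [map_map]
  refine map_congr_left fun p hp => ?_
  rw [Function.comp_apply, ← hf (p - c), tsub_add_cancel_of_le (hL p hp)]

theorem periodic_prodMk_mul {m n : ℕ} (hf₁ : Periodic f (m, 0)) (hf₂ : Periodic f (0, n))
    (j l : ℕ) : Periodic f (m * j, n * l) := by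
  simpa [mul_comm] using (hf₁.nsmul j).add_period (hf₂.nsmul l)

end Periodic

section Rotation

variable {β : Type*} {f : ℕ × ℕ → β} {m n : ℕ}

theorem exists_monoPath_of_loop (hf₁ : Periodic f (m, 0)) (hf₂ : Periodic f (0, n)) (hm : 1 ≤ m)
    {y : ℕ × ℕ} {l : ℕ} {V : List (ℕ × ℕ)} (hV : IsPath y (y + (m, n)) V) (hy₁ : 1 ≤ y.1)
    (hy₂ : y.2 = n * l + 1) (hcol : ∀ p ∈ V.dropLast, p.2 ≤ n * l + n) :
    ∃ i, 1 ≤ i ∧ i ≤ m ∧ ∃ P, MonoPath m n i i P ∧ P.dropLast.map f = V.dropLast.map f := by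
  obtain ⟨j, i, hi, him, hyj⟩ : ∃ j i, 1 ≤ i ∧ i ≤ m ∧ y.1 = m * j + i :=
    ⟨(y.1 - 1) / m, (y.1 - 1) % m + 1, by omega, Nat.mod_lt _ (by omega),
      by have := Nat.div_add_mod (y.1 - 1) m; omega⟩
  have hc : (m * j, n * l) ≤ y := Prod.le_def.2 ⟨by omega, by omega⟩
  refine ⟨i, hi, him, V.map (· - (m * j, n * l)), monoPath_iff.2 ⟨?_, ?_⟩, ?_⟩
  · convert hV.map_tsub hc using 1 <;> ext <;> simp <;> omega
  · rw [← map_dropLast]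
    intro p hp
    obtain ⟨q, hq, rfl⟩ := mem_map.1 hp
    have := hcol q hq
    simp only [Prod.snd_sub]
    omega
  · rw [← map_dropLast, map_map_tsub_of_periodic (periodic_prodMk_mul hf₁ hf₂ j l)
      fun p hp => hc.trans (hV.le_of_mem (mem_of_mem_dropLast hp)).1]

theorem exists_monoPath_of_isPath (hf₁ : Periodic f (m, 0)) (hf₂ : Periodic f (0, n))
    {s t : ℕ} (hs : s < m) (ht : t < n) {W : List (ℕ × ℕ)}
    (hW : IsPath (s + 1, t + 1) (s + m, t + n) W) :
    ∃ i, 1 ≤ i ∧ i ≤ m ∧ ∃ P, MonoPath m n i i P ∧ P.dropLast.map f ⊆ W.map f := by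
  have hclose : NStep (s + m, t + n) ((s + 1, t + 1) + (m, n)) := by
    refine Or.inr (Or.inr ?_)
    simp only [Prod.ext_iff, Prod.fst_add, Prod.snd_add]
    omega
  rcases Nat.eq_zero_or_pos t with rfl | ht₀
  · obtain ⟨i, hi, him, P, hP, hPW⟩ :=
      exists_monoPath_of_loop hf₁ hf₂ (by omega) (hW.concat hclose) (l := 0) (by simp) (by simp)
        fun p hp => by
          rw [dropLast_concat] at hp
          have := (Prod.le_def.1 (hW.le_of_mem hp).2).2
          omega
    exact ⟨i, hi, him, P, hP, by rw [hPW, dropLast_concat]; exact Subset.refl _⟩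
  · obtain ⟨L₁, L₂, x, y, rfl, h₁, hxy, h₂, hx, hy⟩ :=
      hW.exists_split (fun _ _ h => NStep.snd_le h) (k := n) (by simp; omega) (by simp; omega)
    obtain ⟨i, hi, him, P, hP, hPV⟩ :=
      exists_monoPath_of_loop hf₁ hf₂ (by omega) (h₁.rotate hxy h₂ hclose) (l := 1)
        (by have := (Prod.le_def.1 (h₁.le_of_mem h₁.last_mem).1).1
            have := (NStep.fst_le hxy).1
            omega)
        (by simp [hy])
        fun p hp => by
          rw [dropLast_concat] at hp
          rcases mem_append.1 hp with hp | hp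
          · have := (Prod.le_def.1 (h₂.le_of_mem hp).2).2
            omega
          · obtain ⟨q, hq, rfl⟩ := mem_map.1 hp
            have := (Prod.le_def.1 (h₁.le_of_mem hq).2).2
            simp only [Prod.snd_add]
            omega
    refine ⟨i, hi, him, P, hP, ?_⟩
    rw [hPV, dropLast_concat, map_append,
      map_map_add_of_periodic (by simpa using periodic_prodMk_mul hf₁ hf₂ 1 1), map_append]
    exact append_subset.2 ⟨subset_append_right _ _, subset_append_left _ _⟩

theorem MonoPath.exists_row_crossing {i : ℕ} {P : List (ℕ × ℕ)} (hi : 1 ≤ i) (him : i ≤ m)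
    (hP : MonoPath m n i i P) :
    ∃ c ≤ n, ∃ Q ⊆ P.dropLast, IsPath (i, 1) (m + i - 1, c) Q ∧
      (c < n → ∃ R ⊆ P.dropLast, IsPath (m + i, c + 1) (m + i, n) R) := by
  obtain ⟨hP, hcol⟩ := monoPath_iff.1 hP
  obtain ⟨z, hQ, hz⟩ := hP.dropLast (by simp only [ne_eq, Prod.ext_iff]; omega)
  have hz₂ := hcol z hQ.last_mem
  simp only [NStep, Prod.ext_iff] at hz
  by_cases hz₁ : z.1 + 1 = m + i
  · refine ⟨n, le_rfl, _, Subset.refl _, ?_, fun h => absurd h (lt_irrefl n)⟩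
    convert hQ using 1
    ext <;> simp <;> omega
  · obtain ⟨Q, Q', x, y, hQQ', hx, hxy, hy, hx₁, hy₁⟩ :=
      hQ.exists_split (fun _ _ h => NStep.fst_le h) (k := m + i - 1) (by simp; omega) (by omega)
    rw [hQQ'] at hcol ⊢
    refine ⟨x.2, hcol x (mem_append_left _ hx.last_mem), Q, subset_append_left _ _,
      by convert hx using 1; ext <;> simp [hx₁], fun hxn => ?_⟩
    obtain ⟨R, y', hR, hy', hy'₂⟩ :=
      hy.exists_suffix (fun _ _ h => NStep.snd_le h) (k := x.2) (NStep.snd_le hxy).2 (by omega)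
    have := Prod.le_def.1 (hy.le_of_mem (hR.subset hy'.head_mem)).1
    have := Prod.le_def.1 (hy.le_of_mem (hR.subset hy'.head_mem)).2
    refine ⟨R, fun _ h => mem_append_right _ (hR.subset h), ?_⟩
    convert hy' using 1 <;> ext <;> simp <;> omega

theorem exists_isPath_of_monoPath (hf₁ : Periodic f (m, 0)) (hf₂ : Periodic f (0, n))
    {i : ℕ} {P : List (ℕ × ℕ)} (hi : 1 ≤ i) (him : i ≤ m) (hP : MonoPath m n i i P) :
    ∃ s < m, ∃ t < n, ∃ W, IsPath (s + 1, t + 1) (s + m, t + n) W ∧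
      W.map f ⊆ P.dropLast.map f := by
  obtain ⟨c, hcn, Q, hQP, hQ, hR⟩ := MonoPath.exists_row_crossing hi him hP
  rcases hcn.lt_or_eq with hcn | rfl
  · obtain ⟨R, hRP, hR⟩ := hR hcn
    have hRm : ∀ p ∈ R, (m, 0) ≤ p := fun p hp =>
      le_trans (Prod.le_def.2 ⟨by simp, by simp⟩) (hR.le_of_mem hp).1
    refine ⟨i - 1, by omega, c, hcn, R.map (· - (m, 0)) ++ Q.map (· + (0, n)), ?_, ?_⟩
    · have := (hR.map_tsub (hRm _ hR.head_mem)).append ?_ (hQ.map_add (0, n))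
      · convert this using 1 <;> ext <;> simp <;> omega
      · refine Or.inl ?_
        simp only [Prod.ext_iff, Prod.fst_add, Prod.snd_add, Prod.fst_sub, Prod.snd_sub]
        omega
    · rw [map_append, map_map_tsub_of_periodic hf₁ hRm, map_map_add_of_periodic hf₂]
      exact append_subset.2 ⟨map_subset f hRP, map_subset f hQP⟩
  · have := Prod.le_def.1 (hQ.le_of_mem hQ.last_mem).1
    refine ⟨i - 1, by omega, 0, by simp at this; omega, Q, ?_, map_subset f hQP⟩
    convert hQ using 1 <;> ext <;> simp <;> omega

end Rotation

theorem le_foldr_max {α : Type*} [LinearOrder α] (b : α) (l : List α) : b ≤ l.foldr max b := by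
  induction l with
  | nil => exact le_rfl
  | cons x l ih => exact le_max_of_le_right ih

theorem foldr_max_mono {α : Type*} [LinearOrder α] {b : α} {l₁ l₂ : List α} (h : l₁ ⊆ l₂) :
    l₁.foldr max b ≤ l₂.foldr max b := by
  induction l₁ with
  | nil => exact le_foldr_max b l₂
  | cons x l ih =>
    rw [cons_subset] at h
    exact max_le (le_max_of_le' b h.1 le_rfl) (ih h.2)

theorem dF_nonneg {m n : ℕ} (d : ℕ → ℕ → ℝ) : 0 ≤ dF m n d :=
  Real.sInf_nonneg (by rintro _ ⟨L, -, rfl⟩; exact le_foldr_max 0 _)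

/-- The representative of `r` modulo `m` in `{1, …, m}`; writing `r + m - 1` rather than `r - 1`
keeps it periodic at `r = 0`. -/
def cycIndex (m r : ℕ) : ℕ := (r + m - 1) % m + 1

theorem cycIndex_add_self (m r : ℕ) : cycIndex m (r + m) = cycIndex m r := by
  rw [cycIndex, cycIndex, show r + m + m - 1 = r + m - 1 + m by omega, Nat.add_mod_right]

theorem cycIndex_of_le {m r : ℕ} (h₁ : 1 ≤ r) (h₂ : r ≤ m) : cycIndex m r = r := by
  rw [cycIndex, show r + m - 1 = r - 1 + m by omega, Nat.add_mod_right,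
    Nat.mod_eq_of_lt (by omega)]
  omega

theorem cycIndex_eq_ite {m r : ℕ} (h₁ : 1 ≤ r) (h₂ : r ≤ 2 * m) :
    cycIndex m r = if r ≤ m then r else r - m := by
  split_ifs with h
  · exact cycIndex_of_le h₁ h
  · obtain ⟨k, rfl⟩ : ∃ k, r = k + m := ⟨r - m, by omega⟩
    rw [cycIndex_add_self, cycIndex_of_le (by omega) (by omega), Nat.add_sub_cancel]

theorem cshift_eq_cycIndex {M : Type*} {m s a : ℕ} (u : ℕ → M) (h₁ : 1 ≤ a) (h₂ : a ≤ m)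
    (hs : s < m) : cshift m u s a = u (cycIndex m (a + s)) := by
  rw [cshift, cycIndex_eq_ite (by omega) (by omega)]
  split_ifs <;> rfl

section Torus

variable {M : Type*} {m n : ℕ}

noncomputable def torusDist [Dist M] (m n : ℕ) (u v : ℕ → M) (p : ℕ × ℕ) : ℝ :=
  dist (u (cycIndex m p.1)) (v (cycIndex n p.2))

theorem torusDist_periodic_fst [Dist M] (u v : ℕ → M) : Periodic (torusDist m n u v) (m, 0) :=
  fun p => by simp [torusDist, cycIndex_add_self]

theorem torusDist_periodic_snd [Dist M] (u v : ℕ → M) : Periodic (torusDist m n u v) (0, n) :=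
  fun p => by simp [torusDist, cycIndex_add_self]

variable [MetricSpace M] (u v : ℕ → M)

theorem couplingLength_cshift {s t : ℕ} (hs : s < m) (ht : t < n) {C : List (ℕ × ℕ)}
    (hC : IsPath (1, 1) (m, n) C) :
    couplingLength (fun a b => dist (cshift m u s a) (cshift n v t b)) C =
      ((C.map (· + (s, t))).map (torusDist m n u v)).foldr max 0 := by
  rw [couplingLength, map_map]
  congr 1
  refine map_congr_left fun p hp => ?_
  have h₁ := Prod.le_def.1 (hC.le_of_mem hp).1
  have h₂ := Prod.le_def.1 (hC.le_of_mem hp).2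
  rw [Function.comp_apply, cshift_eq_cycIndex u h₁.1 h₂.1 hs, cshift_eq_cycIndex v h₁.2 h₂.2 ht]
  rfl

theorem pathVal_dd {i : ℕ} (hi : 1 ≤ i) (him : i ≤ m) {P : List (ℕ × ℕ)}
    (hP : MonoPath m n i i P) :
    pathVal (dd m u v) P = (P.dropLast.map (torusDist m n u v)).foldr max 0 := by
  obtain ⟨hP, hcol⟩ := monoPath_iff.1 hP
  rw [pathVal]
  congr 1
  refine map_congr_left fun p hp => ?_
  have h₁ := Prod.le_def.1 (hP.le_of_mem (mem_of_mem_dropLast hp)).1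
  have h₂ := Prod.le_def.1 (hP.le_of_mem (mem_of_mem_dropLast hp)).2
  rw [dd, torusDist, cycIndex_eq_ite (by simp at h₁; omega) (by simp at h₂; omega),
    cycIndex_of_le h₁.2 (hcol p hp)]
  split_ifs <;> rfl

theorem dcF_le_dcFpath (hm : 1 ≤ m) (hn : 1 ≤ n) : dcF m n u v ≤ dcFpath m n (dd m u v) := by
  have hE₁ := torusDist_periodic_fst (m := m) (n := n) u v
  have hE₂ := torusDist_periodic_snd (m := m) (n := n) u v
  obtain ⟨C₀, hC₀⟩ := exists_isPath (a := (1, 1)) (b := (m, n)) ⟨hm, hn⟩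
  obtain ⟨i₀, hi₀, hi₀m, P₀, hP₀, -⟩ :=
    exists_monoPath_of_isPath hE₁ hE₂ (s := 0) (t := 0) hm hn (by simpa using hC₀)
  refine le_csInf ⟨_, i₀, hi₀, hi₀m, P₀, hP₀, rfl⟩ ?_
  rintro _ ⟨i, hi, him, P, hP, rfl⟩
  obtain ⟨s, hs, t, ht, W, hW, hWP⟩ := exists_isPath_of_monoPath hE₁ hE₂ hi him hP
  obtain ⟨C, hC, rfl⟩ := hW.exists_map_add (c := (s, t)) (Prod.le_def.2 ⟨by simp, by simp⟩)
  replace hC : IsPath (1, 1) (m, n) C := by convert hC using 1 <;> ext <;> simp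
  calc dcF m n u v ≤ dF m n (fun a b => dist (cshift m u s a) (cshift n v t b)) :=
        csInf_le ⟨0, by rintro _ ⟨s, -, t, -, rfl⟩; exact dF_nonneg _⟩ ⟨s, hs, t, ht, rfl⟩
    _ ≤ couplingLength (fun a b => dist (cshift m u s a) (cshift n v t b)) C :=
        csInf_le ⟨0, by rintro _ ⟨L, -, rfl⟩; exact le_foldr_max 0 _⟩
          ⟨_, isCoupling_iff.2 hC, rfl⟩
    _ = ((C.map (· + (s, t))).map (torusDist m n u v)).foldr max 0 :=
        couplingLength_cshift u v hs ht hC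
    _ ≤ (P.dropLast.map (torusDist m n u v)).foldr max 0 := foldr_max_mono hWP
    _ = pathVal (dd m u v) P := (pathVal_dd u v hi him hP).symm

theorem dcFpath_le_dcF (hm : 1 ≤ m) (hn : 1 ≤ n) : dcFpath m n (dd m u v) ≤ dcF m n u v := by
  refine le_csInf ⟨_, 0, hm, 0, hn, rfl⟩ ?_
  rintro _ ⟨s, hs, t, ht, rfl⟩
  obtain ⟨C₀, hC₀⟩ := exists_isPath (a := (1, 1)) (b := (m, n)) ⟨hm, hn⟩
  refine le_csInf ⟨_, C₀, isCoupling_iff.2 hC₀, rfl⟩ ?_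
  rintro _ ⟨C, hC, rfl⟩
  rw [isCoupling_iff] at hC
  obtain ⟨i, hi, him, P, hP, hPC⟩ :=
    exists_monoPath_of_isPath (torusDist_periodic_fst u v) (torusDist_periodic_snd u v) hs ht
      (by simpa [add_comm] using hC.map_add (s, t))
  calc dcFpath m n (dd m u v) ≤ pathVal (dd m u v) P :=
        csInf_le ⟨0, by rintro _ ⟨i, -, -, L, -, rfl⟩; exact le_foldr_max 0 _⟩
          ⟨i, hi, him, P, hP, rfl⟩
    _ = (P.dropLast.map (torusDist m n u v)).foldr max 0 := pathVal_dd u v hi him hP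
    _ ≤ ((C.map (· + (s, t))).map (torusDist m n u v)).foldr max 0 := foldr_max_mono hPC
    _ = couplingLength (fun a b => dist (cshift m u s a) (cshift n v t b)) C :=
        (couplingLength_cshift u v hs ht hC).symm

end Torus

end DiscreteFrechet

/-- The closed discrete Fréchet distance equals the min-max over wrap-around monotone
paths in the doubled diagram. -/
theorem dcF_eq_minmax_paths {M : Type*} [MetricSpace M]
    (m n : ℕ) (hm : 1 ≤ m) (hn : 1 ≤ n) (u v : ℕ → M) :
    dcF m n u v = dcFpath m n (dd m u v) :=
  le_antisymm (DiscreteFrechet.dcF_le_dcFpath u v hm hn) (DiscreteFrechet.dcFpath_le_dcF u v hm hn)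
end
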